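/- Let G be a finite connected graph and let P be a set of three longest paths of G. Then l(G) ≥ 6·f(G,P) − 2. -/

import Mathlib

open SimpleGraph

noncomputable section

/-- The maximum length (number of edges) of a path in `G`. -/
def maxPathLength {V : Type} (G : SimpleGraph V) : ℕ :=
  sSup {n : ℕ | ∃ (a b : V) (q : G.Walk a b), q.IsPath ∧ q.length = n}

/-- `p` is a longest path of `G`: a path whose length equals `maxPathLength G`. -/
def IsLongestPath {V : Type} (G : SimpleGraph V) {u v : V} (p : G.Walk u v) : Prop :=
  p.IsPath ∧ p.length = maxPathLength G

/-- The vertex set of a walk. -/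
def walkVerts {V : Type} {G : SimpleGraph V} {u v : V} (p : G.Walk u v) : Set V :=
  {x | x ∈ p.support}

/-- The distance `d_G(v, U)` from a vertex `v` to a set `U` of vertices. -/
def distToSet {V : Type} (G : SimpleGraph V) (v : V) (U : Set V) : ℕ :=
  sInf (G.dist v '' U)

/-- A walk bundled together with its endpoints, used to compare paths with
different endpoints for (in)equality. -/
def pathSigma {V : Type} (G : SimpleGraph V) {u v : V} (p : G.Walk u v) :
    Σ a : V, Σ b : V, G.Walk a b := ⟨u, v, p⟩

/-- `f(G, {P₁, P₂}) = min_{v ∈ V(G)} (d_G(v, V(P₁)) + d_G(v, V(P₂)))`. -/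
def fTwo {V : Type} (G : SimpleGraph V) {u₁ v₁ u₂ v₂ : V}
    (p₁ : G.Walk u₁ v₁) (p₂ : G.Walk u₂ v₂) : ℕ :=
  sInf (Set.range fun v : V => distToSet G v (walkVerts p₁) + distToSet G v (walkVerts p₂))

/-- `f(G, {P₁, P₂, P₃}) = min_{v ∈ V(G)} Σᵢ d_G(v, V(Pᵢ))`. -/
def fThree {V : Type} (G : SimpleGraph V) {u₁ v₁ u₂ v₂ u₃ v₃ : V}
    (p₁ : G.Walk u₁ v₁) (p₂ : G.Walk u₂ v₂) (p₃ : G.Walk u₃ v₃) : ℕ :=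
  sInf (Set.range fun v : V =>
    distToSet G v (walkVerts p₁) + distToSet G v (walkVerts p₂) + distToSet G v (walkVerts p₃))

/-- `q` is a subpath of `p` (i.e. a path "on" `p`). -/
def IsSubpath {V : Type} (G : SimpleGraph V) {a b u v : V}
    (q : G.Walk a b) (p : G.Walk u v) : Prop :=
  ∃ (r : G.Walk u a) (s : G.Walk b v), p = r.append (q.append s)

/-- `q` is an `X`-`Y` path: a path meeting `X` exactly in its first end-vertex and
`Y` exactly in its last end-vertex. -/
def IsXYPath {V : Type} (G : SimpleGraph V) (X Y : Set V) {a b : V} (q : G.Walk a b) : Prop :=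
  q.IsPath ∧ walkVerts q ∩ X = {a} ∧ walkVerts q ∩ Y = {b}

/-- `tCount G p X Y` is the number of `X`-`Y` paths that are subpaths of `p`
(counted without regard to orientation). -/
def tCount {V : Type} (G : SimpleGraph V) {u v : V} (p : G.Walk u v) (X Y : Set V) : ℕ :=
  Nat.card {q : Σ a : V, Σ b : V, G.Walk a b //
    IsSubpath G q.2.2 p ∧ (IsXYPath G X Y q.2.2 ∨ IsXYPath G Y X q.2.2)}

/-!
Any two longest paths of a connected graph meet: otherwise a path joining them and touching each
only at its ends, extended by the longer halves of both, would be longer. So if `f > 0`, walking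
along `P₁` from `P₂` to `P₃` and then along `P₃` back to `P₂` gives a path `K` from `x` to `c`,
meeting `P₂` only in its ends, made of two pieces of length at least `f`: the first starts
on `P₁ ∩ P₂` and ends on `P₃`, the second starts on `P₁` and ends on `P₂ ∩ P₃`.
Writing `P₂ = A U B` with `U` from `x` to `c`, the paths `B⁻¹ U⁻¹ (K - c)`, `A K B` and
`A K (U⁻¹ - x)` have total length `2 l(G) + 3 |K| - 2 ≤ 3 l(G)`, hence `6 f ≤ 3 |K| ≤ l(G) + 2`.
-/

open SimpleGraph.Walk

namespace SimpleGraph.Walk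

variable {V : Type} {G : SimpleGraph V} {a b u v w : V}

lemma IsPath.append {p : G.Walk u v} {q : G.Walk v w} (hp : p.IsPath) (hq : q.IsPath)
    (h : ∀ y ∈ p.support, y ∈ q.support → y = v) : (p.append q).IsPath := by
  rw [isPath_def, support_append]
  refine List.Nodup.append hp.support_nodup hq.support_nodup.tail fun y hy hy' ↦ ?_
  have hq' := hq.support_nodup
  rw [← cons_tail_support] at hq'
  exact (List.nodup_cons.mp hq').1 (h y hy (List.mem_of_mem_tail hy') ▸ hy')

lemma IsPath.eq_of_mem_support_append {p : G.Walk u v} {q : G.Walk v w}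
    (hpq : (p.append q).IsPath) {y : V} (hp : y ∈ p.support) (hq : y ∈ q.support) : y = v := by
  by_contra hyv
  exact hpq.ne_of_mem_support_of_append hyv hp hq rfl

lemma IsPath.append_append_of_support_subset {x c e : V} {Ta : G.Walk a x} {D : G.Walk x b}
    {K : G.Walk x c} {R : G.Walk c e} (hP : (Ta.append D).IsPath) (hK : K.IsPath)
    (hR : R.IsPath) (hRD : R.support ⊆ D.support)
    (hKTa : ∀ y ∈ K.support, y ∈ Ta.support → y = x)
    (hKR : ∀ y ∈ K.support, y ∈ R.support → y = c) (hxR : x ∉ R.support) :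
    (Ta.append (K.append R)).IsPath := by
  refine hP.of_append_left.append (hK.append hR hKR) fun y hy hy' ↦ ?_
  rcases (mem_support_append_iff _ _).mp hy' with hyK | hyR
  · exact hKTa y hyK hy
  · obtain rfl := hP.eq_of_mem_support_append hy (hRD hyR)
    exact absurd hyR hxR

lemma support_dropLast_subset (p : G.Walk u v) : p.dropLast.support ⊆ p.support := by
  rw [dropLast, support_take]
  exact List.take_subset _ _

lemma IsPath.end_notMem_support_dropLast {p : G.Walk u v} (hp : p.IsPath) (huv : u ≠ v) :
    v ∉ p.dropLast.support := by
  have hnil : ¬p.Nil := fun h ↦ huv h.eq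
  have hnd := hp.support_nodup
  rw [← support_dropLast_concat hnil, List.nodup_append] at hnd
  exact fun hv ↦ hnd.2.2 v hv v (List.mem_singleton_self v) rfl

lemma IsPath.length_le_maxPathLength [Fintype V] {p : G.Walk u v} (hp : p.IsPath) :
    p.length ≤ maxPathLength G :=
  le_csSup ⟨Fintype.card V, by rintro n ⟨x, y, q, hq, rfl⟩; exact hq.length_lt.le⟩
    ⟨u, v, p, hp, rfl⟩

lemma exists_walk_support_subset (p : G.Walk u v) (ha : a ∈ p.support) (hb : b ∈ p.support) :
    ∃ q : G.Walk a b, q.support ⊆ p.support := by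
  classical
  refine ⟨(p.takeUntil a ha).reverse.append (p.takeUntil b hb), fun y hy ↦ ?_⟩
  rw [mem_support_append_iff, support_reverse, List.mem_reverse] at hy
  rcases hy with hy | hy <;> exact support_takeUntil_subset_support _ _ hy

lemma exists_walk_meeting_set_only_at_end {T : Set V} (p : G.Walk u v) (hv : v ∈ T) :
    ∃ c ∈ T, ∃ q : G.Walk u c, q.support ⊆ p.support ∧ ∀ y ∈ q.support, y ∈ T → y = c := by
  induction p with
  | nil => exact ⟨_, hv, nil, List.Subset.refl _, by simp⟩
  | @cons u x v h p ih =>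
    by_cases hu : u ∈ T
    · exact ⟨u, hu, nil, by simp, by simp⟩
    obtain ⟨c, hc, q, hqp, hqT⟩ := ih hv
    refine ⟨c, hc, cons h q, List.cons_subset_cons _ hqp, fun y hy hyT ↦ ?_⟩
    rw [support_cons, List.mem_cons] at hy
    rcases hy with rfl | hy
    · exact absurd hyT hu
    · exact hqT y hy hyT

lemma exists_isXYPath {X Y : Set V} (p : G.Walk u v) (hu : u ∈ X) (hv : v ∈ Y) :
    ∃ (x y : V) (q : G.Walk x y), IsXYPath G X Y q ∧ q.support ⊆ p.support := by
  classical
  obtain ⟨y, hy, p₁, hp₁, hp₁Y⟩ := exists_walk_meeting_set_only_at_end p hv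
  obtain ⟨x, hx, p₂, hp₂, hp₂X⟩ := exists_walk_meeting_set_only_at_end p₁.reverse hu
  have hsub : p₂.reverse.bypass.support ⊆ p₁.support := fun z hz ↦ by
    simpa using hp₂ (by simpa using p₂.reverse.support_bypass_subset_support hz)
  refine ⟨x, y, p₂.reverse.bypass, ⟨bypass_isPath _, ?_, ?_⟩, List.Subset.trans hsub hp₁⟩
  · refine Set.eq_singleton_iff_unique_mem.mpr ⟨⟨start_mem_support _, hx⟩, fun z ⟨hz, hzX⟩ ↦ ?_⟩
    exact hp₂X z (by simpa using p₂.reverse.support_bypass_subset_support hz) hzX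
  · exact Set.eq_singleton_iff_unique_mem.mpr ⟨⟨end_mem_support _, hy⟩,
      fun z ⟨hz, hzY⟩ ↦ hp₁Y z (hsub hz) hzY⟩

lemma IsPath.exists_half_segment_to {p : G.Walk a b} (hp : p.IsPath) (hv : v ∈ p.support) :
    ∃ (e : V) (q : G.Walk e v), q.IsPath ∧ p.length ≤ 2 * q.length ∧ q.support ⊆ p.support := by
  obtain ⟨q, r, hq, hr, rfl⟩ := hp.mem_support_iff_exists_append.mp hv
  rw [length_append]
  rcases le_total r.length q.length with h | h
  · exact ⟨a, q, hq, by omega, support_subset_support_append_left q r⟩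
  · refine ⟨b, r.reverse, hr.reverse, by rw [length_reverse]; omega, fun y hy ↦ ?_⟩
    rw [support_reverse, List.mem_reverse] at hy
    exact support_subset_support_append_right q r hy

end SimpleGraph.Walk

namespace IsXYPath

variable {V : Type} {G : SimpleGraph V} {X Y : Set V} {a b : V} {q : G.Walk a b}

lemma start_mem (h : IsXYPath G X Y q) : a ∈ X :=
  (h.2.1.symm.subset rfl).2

lemma end_mem (h : IsXYPath G X Y q) : b ∈ Y :=
  (h.2.2.symm.subset rfl).2

lemma eq_start_of_mem (h : IsXYPath G X Y q) {y : V} (hy : y ∈ q.support) (hyX : y ∈ X) :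
    y = a :=
  h.2.1.subset ⟨hy, hyX⟩

lemma eq_end_of_mem (h : IsXYPath G X Y q) {y : V} (hy : y ∈ q.support) (hyY : y ∈ Y) :
    y = b :=
  h.2.2.subset ⟨hy, hyY⟩

end IsXYPath

section LongestPaths

variable {V : Type} {G : SimpleGraph V} {a b a' b' : V}

lemma distToSet_le_dist {v y : V} {U : Set V} (hy : y ∈ U) : distToSet G v U ≤ G.dist v y :=
  Nat.sInf_le ⟨y, hy, rfl⟩

lemma fThree_le_dist {u₁ v₁ u₂ v₂ u₃ v₃ : V} {p₁ : G.Walk u₁ v₁} {p₂ : G.Walk u₂ v₂}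
    {p₃ : G.Walk u₃ v₃} {y z : V} (hy₁ : y ∈ p₁.support) (hy₂ : y ∈ p₂.support)
    (hz : z ∈ p₃.support) : fThree G p₁ p₂ p₃ ≤ G.dist y z :=
  calc fThree G p₁ p₂ p₃
      ≤ distToSet G y (walkVerts p₁) + distToSet G y (walkVerts p₂) +
          distToSet G y (walkVerts p₃) := Nat.sInf_le ⟨y, rfl⟩
    _ ≤ G.dist y y + G.dist y y + G.dist y z := by
        gcongr <;> exact distToSet_le_dist ‹_›
    _ = G.dist y z := by simp

lemma fThree_rotate {u₁ v₁ u₂ v₂ u₃ v₃ : V} (p₁ : G.Walk u₁ v₁) (p₂ : G.Walk u₂ v₂)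
    (p₃ : G.Walk u₃ v₃) : fThree G p₁ p₂ p₃ = fThree G p₂ p₃ p₁ := by
  simp only [fThree, add_comm, add_left_comm]

lemma IsLongestPath.reverse {p : G.Walk a b} (hp : IsLongestPath G p) :
    IsLongestPath G p.reverse :=
  ⟨hp.1.reverse, (length_reverse p).trans hp.2⟩

lemma exists_ear_two_mul_fThree_le {u₁ v₁ u₂ v₂ u₃ v₃ x₀ w₀ c₀ : V} {p₁ : G.Walk u₁ v₁}
    {p₂ : G.Walk u₂ v₂} {p₃ : G.Walk u₃ v₃} (hx₀₁ : x₀ ∈ p₁.support) (hx₀₂ : x₀ ∈ p₂.support)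
    (hw₀₁ : w₀ ∈ p₁.support) (hw₀₃ : w₀ ∈ p₃.support) (hc₀₂ : c₀ ∈ p₂.support)
    (hc₀₃ : c₀ ∈ p₃.support) (hf : 0 < fThree G p₁ p₂ p₃) :
    ∃ (x c : V) (K : G.Walk x c), K.IsPath ∧ x ∈ p₂.support ∧ c ∈ p₂.support ∧ x ≠ c ∧
      (∀ y ∈ K.support, y ∈ p₂.support → y = x ∨ y = c) ∧ 2 * fThree G p₁ p₂ p₃ ≤ K.length := by
  obtain ⟨W₁, hW₁⟩ := p₁.exists_walk_support_subset hx₀₁ hw₀₁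
  obtain ⟨x, w, M, hM, hMW₁⟩ :=
    W₁.exists_isXYPath (X := walkVerts p₂) (Y := walkVerts p₃) hx₀₂ hw₀₃
  obtain ⟨W₃, hW₃⟩ := p₃.exists_walk_support_subset hM.end_mem hc₀₃
  obtain ⟨w', c, S, hS, hSW₃⟩ := W₃.exists_isXYPath (X := {w}) (Y := walkVerts p₂) rfl hc₀₂
  obtain rfl : w = w' := hS.start_mem.symm
  have hx₁ : x ∈ p₁.support := hW₁ (hMW₁ M.start_mem_support)
  have hw₁ : w ∈ p₁.support := hW₁ (hMW₁ M.end_mem_support)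
  have hSp₃ : S.support ⊆ p₃.support := List.Subset.trans hSW₃ hW₃
  have hc₃ : c ∈ p₃.support := hSp₃ S.end_mem_support
  have hfM : fThree G p₁ p₂ p₃ ≤ M.length :=
    (fThree_le_dist hx₁ hM.start_mem hM.end_mem).trans (dist_le M)
  have hfS : fThree G p₁ p₂ p₃ ≤ S.length := by
    rw [fThree_rotate]
    exact (fThree_le_dist hS.end_mem hc₃ hw₁).trans (dist_comm.trans_le (dist_le S))
  have hxc : x ≠ c := by
    rintro rfl
    simpa [Nat.pos_iff_ne_zero] using (fThree_le_dist hx₁ hM.start_mem hc₃).trans_lt' hf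
  have hK : (M.append S).IsPath :=
    hM.1.append hS.1 fun y hy hy' ↦ hM.eq_end_of_mem hy (hSp₃ hy')
  refine ⟨x, c, M.append S, hK, hM.start_mem, hS.end_mem, hxc, fun y hy hy₂ ↦ ?_,
    by rw [length_append]; omega⟩
  rcases (mem_support_append_iff _ _).mp hy with hy | hy
  exacts [.inl (hM.eq_start_of_mem hy hy₂), .inr (hS.eq_end_of_mem hy hy₂)]

variable [Fintype V]

lemma IsLongestPath.exists_common_vertex (hG : G.Connected) {p : G.Walk a b} {q : G.Walk a' b'}
    (hp : IsLongestPath G p) (hq : IsLongestPath G q) : ∃ z, z ∈ p.support ∧ z ∈ q.support := by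
  by_contra! hdisj
  obtain ⟨x, y, r, hr, -⟩ := (hG a a').some.exists_isXYPath (X := walkVerts p)
    (Y := walkVerts q) p.start_mem_support q.start_mem_support
  obtain ⟨_, s, hs, hps, hsp⟩ := hp.1.exists_half_segment_to hr.start_mem
  obtain ⟨_, t, ht, hqt, htq⟩ := hq.1.exists_half_segment_to hr.end_mem
  have hxy : x ≠ y := fun h ↦ hdisj x hr.start_mem (h ▸ hr.end_mem)
  have hrt : (r.append t.reverse).IsPath := hr.1.append ht.reverse fun z hz hz' ↦
    hr.eq_end_of_mem hz (htq (by simpa using hz'))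
  have hsrt : (s.append (r.append t.reverse)).IsPath := hs.append hrt fun z hz hz' ↦ by
    rw [mem_support_append_iff, support_reverse, List.mem_reverse] at hz'
    rcases hz' with hz' | hz'
    · exact hr.eq_start_of_mem hz' (hsp hz)
    · exact absurd (htq hz') (hdisj z (hsp hz))
  have hlong := hsrt.length_le_maxPathLength
  have hr1 : r.length ≠ 0 := fun h ↦ hxy (eq_of_length_eq_zero h)
  simp only [length_append, length_reverse] at hlong
  have hpL := hp.2
  have hqL := hq.2
  omega

lemma IsLongestPath.three_mul_ear_length_le_of_mem_right {x c : V} {Ta : G.Walk a x}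
    {D : G.Walk x b} (hP : IsLongestPath G (Ta.append D)) (hc : c ∈ D.support) (hxc : x ≠ c)
    {K : G.Walk x c} (hK : K.IsPath)
    (hKP : ∀ y ∈ K.support, y ∈ (Ta.append D).support → y = x ∨ y = c) :
    3 * K.length ≤ maxPathLength G + 2 := by
  obtain ⟨U, T, rfl⟩ := D.mem_support_iff_exists_append.mp hc
  have hUT : (U.append T).IsPath := hP.1.of_append_right
  have hU : U.reverse.IsPath := hUT.of_append_left.reverse
  have hxT : x ∉ T.support := fun h ↦ hxc (hUT.eq_of_mem_support_append U.start_mem_support h)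
  have hcTa : c ∉ Ta.support := fun h ↦ hxc (hP.1.eq_of_mem_support_append h (by simp)).symm
  have hKTa : ∀ y ∈ K.support, y ∈ Ta.support → y = x := fun y hy hyTa ↦
    (hKP y hy (by simp [hyTa])).resolve_right (by rintro rfl; exact hcTa hyTa)
  have hKT : ∀ y ∈ K.support, y ∈ T.support → y = c := fun y hy hyT ↦
    (hKP y hy (by simp [hyT])).resolve_left (by rintro rfl; exact hxT hyT)
  have hcK : c ∉ K.dropLast.support := hK.end_notMem_support_dropLast hxc
  have hxU : x ∉ U.reverse.dropLast.support := hU.end_notMem_support_dropLast hxc.symm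
  have hU'U : U.reverse.dropLast.support ⊆ U.support := fun y hy ↦ by
    simpa using U.reverse.support_dropLast_subset hy
  have h₁ : ((U.append T).reverse.append K.dropLast).IsPath :=
    hUT.reverse.append hK.dropLast fun y hy hy' ↦
      (hKP y (K.support_dropLast_subset hy') (by simp at hy ⊢; tauto)).resolve_right
        (by rintro rfl; exact hcK hy')
  have h₂ : (Ta.append (K.append T)).IsPath :=
    hP.1.append_append_of_support_subset hK hUT.of_append_right
      (support_subset_support_append_right U T) hKTa hKT hxT
  have h₃ : (Ta.append (K.append U.reverse.dropLast)).IsPath :=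
    hP.1.append_append_of_support_subset hK hU.dropLast
      (List.Subset.trans hU'U (support_subset_support_append_left U T)) hKTa
      (fun y hy hy' ↦ (hKP y hy (by simp [hU'U hy'])).resolve_left
        (by rintro rfl; exact hxU hy'))
      hxU
  have l₁ := h₁.length_le_maxPathLength
  have l₂ := h₂.length_le_maxPathLength
  have l₃ := h₃.length_le_maxPathLength
  have hK1 := length_dropLast_add_one (p := K) fun h ↦ hxc h.eq
  have hU1 := length_dropLast_add_one (p := U.reverse) fun h ↦ hxc h.eq.symm
  have hPL := hP.2
  simp only [length_append, length_reverse] at l₁ l₂ l₃ hU1 hPL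
  omega

lemma IsLongestPath.three_mul_ear_length_le {P : G.Walk a b} (hP : IsLongestPath G P) {x c : V}
    (hx : x ∈ P.support) (hc : c ∈ P.support) (hxc : x ≠ c) {K : G.Walk x c} (hK : K.IsPath)
    (hKP : ∀ y ∈ K.support, y ∈ P.support → y = x ∨ y = c) :
    3 * K.length ≤ maxPathLength G + 2 := by
  obtain ⟨Ta, D, rfl⟩ := P.mem_support_iff_exists_append.mp hx
  rcases (mem_support_append_iff _ _).mp hc with hc | hc
  · have hP' : IsLongestPath G (D.reverse.append Ta.reverse) := reverse_append Ta D ▸ hP.reverse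
    refine hP'.three_mul_ear_length_le_of_mem_right (by simpa using hc) hxc hK fun y hy hy' ↦ ?_
    simp only [mem_support_append_iff, support_reverse, List.mem_reverse] at hy' hKP
    exact hKP y hy hy'.symm
  · exact hP.three_mul_ear_length_le_of_mem_right hc hxc hK hKP

end LongestPaths

theorem maxPathLength_ge_general {V : Type} [Fintype V] (G : SimpleGraph V) (hG : G.Connected)
    {u₁ v₁ u₂ v₂ u₃ v₃ : V} (p₁ : G.Walk u₁ v₁) (p₂ : G.Walk u₂ v₂) (p₃ : G.Walk u₃ v₃)
    (h₁ : IsLongestPath G p₁) (h₂ : IsLongestPath G p₂) (h₃ : IsLongestPath G p₃) :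
    (maxPathLength G : ℤ) ≥ 6 * (fThree G p₁ p₂ p₃ : ℤ) - 2 := by
  rcases Nat.eq_zero_or_pos (fThree G p₁ p₂ p₃) with hf | hf
  · omega
  obtain ⟨x₀, hx₀₁, hx₀₂⟩ := h₁.exists_common_vertex hG h₂
  obtain ⟨w₀, hw₀₁, hw₀₃⟩ := h₁.exists_common_vertex hG h₃
  obtain ⟨c₀, hc₀₂, hc₀₃⟩ := h₂.exists_common_vertex hG h₃
  obtain ⟨x, c, K, hK, hx, hc, hxc, hKp₂, hfK⟩ :=
    exists_ear_two_mul_fThree_le hx₀₁ hx₀₂ hw₀₁ hw₀₃ hc₀₂ hc₀₃ hf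
  have h3K := h₂.three_mul_ear_length_le hx hc hxc hK hKp₂
  omega

/-- For a set `P` of three longest paths of a finite connected graph,
`l(G) ≥ 6 · f(G, P) − 2`. -/
theorem maxPathLength_ge {V : Type} [Fintype V] (G : SimpleGraph V) (hG : G.Connected)
    {u₁ v₁ u₂ v₂ u₃ v₃ : V} (p₁ : G.Walk u₁ v₁) (p₂ : G.Walk u₂ v₂) (p₃ : G.Walk u₃ v₃)
    (h₁ : IsLongestPath G p₁) (h₂ : IsLongestPath G p₂) (h₃ : IsLongestPath G p₃)
    (hne₁₂ : pathSigma G p₁ ≠ pathSigma G p₂)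
    (hne₁₃ : pathSigma G p₁ ≠ pathSigma G p₃)
    (hne₂₃ : pathSigma G p₂ ≠ pathSigma G p₃) :
    (maxPathLength G : ℤ) ≥ 6 * (fThree G p₁ p₂ p₃ : ℤ) - 2 :=
  maxPathLength_ge_general G hG p₁ p₂ p₃ h₁ h₂ h₃
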